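/- Let n ≥ 1, let i < k, and let w' = (s_{a_i} ⋯ s_i)(s_{a_{i+1}} ⋯ s_{i+1}) ⋯ (s_{a_k} ⋯ s_k) in S_{n+1}, where a_{s+1} = a_s + 1 for all i ≤ s ≤ k−1 and s ≤ a_s ≤ n for all s. Then for every integer t with i ≤ t ≤ a_k and t ≠ k, the permutation w' sends the simple root α_t to a simple root: there exists 1 ≤ l ≤ n with l ≠ a_i such that w'(α_t) = α_l (where S_{n+1} acts on the A_n roots by permuting coordinates). -/
import Mathlib


/-- The adjacent transposition `s j = (j, j+1)`, realized inside `Equiv.Perm ℕ`. -/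
def adjTrans (j : ℕ) : Equiv.Perm ℕ := Equiv.swap j (j + 1)

/-- The product `s_a s_{a-1} ⋯ s_b` with decreasing indices from `a` down to `b`. -/
def decProd (b a : ℕ) : Equiv.Perm ℕ :=
  ((List.range' b (a + 1 - b)).reverse.map adjTrans).prod

/-- The standard basis vector `e p`. -/
def e (p : ℕ) : ℕ → ℤ := fun q => if q = p then 1 else 0

/-- The simple root `α j = e j - e (j+1)` of type `A`. -/
def α (j : ℕ) : ℕ → ℤ := fun q => e j q - e (j + 1) q

/-- The action of a permutation on vectors, permuting the standard basis:
`act σ (e p) = e (σ p)`. -/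
def act (σ : Equiv.Perm ℕ) (v : ℕ → ℤ) : ℕ → ℤ := fun q => v (σ⁻¹ q)

lemma act_alpha (σ : Equiv.Perm ℕ) (t l : ℕ) (h1 : σ t = l) (h2 : σ (t + 1) = l + 1) :
    act σ (α t) = α l := by
  funext q
  simp only [act, α, e]
  have ht : σ⁻¹ q = t ↔ q = l := by
    rw [Equiv.Perm.inv_def, Equiv.symm_apply_eq, h1, eq_comm]
  have ht2 : σ⁻¹ q = t + 1 ↔ q = l + 1 := by
    rw [Equiv.Perm.inv_def, Equiv.symm_apply_eq, h2, eq_comm]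
  simp only [ht, ht2]

lemma decProd_self (b : ℕ) : decProd b b = adjTrans b := by
  have : b + 1 - b = 1 := by omega
  simp [decProd, this, List.range']

lemma decProd_succ (b c : ℕ) (h : b ≤ c) : decProd b (c + 1) = adjTrans (c + 1) * decProd b c := by
  have h1 : c + 1 + 1 - b = (c + 1 - b) + 1 := by omega
  have h2 : b + (c + 1 - b) = c + 1 := by omega
  simp [decProd, h1, List.range'_concat, h2]

lemma adjTrans_apply (j x : ℕ) :
    adjTrans j x = if x = j then j + 1 else if x = j + 1 then j else x := by
  simp [adjTrans, Equiv.swap_apply_def]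

lemma decProd_apply (b c x : ℕ) (hbc : b ≤ c) :
    decProd b c x = if x = b then c + 1 else if b < x ∧ x ≤ c + 1 then x - 1 else x := by
  induction c with
  | zero =>
    have hb : b = 0 := by omega
    subst hb
    rw [decProd_self, adjTrans_apply]
    split_ifs <;> omega
  | succ c ih =>
    rcases Nat.eq_or_lt_of_le hbc with h | h
    · subst h
      rw [decProd_self, adjTrans_apply]
      split_ifs <;> omega
    · have hbc' : b ≤ c := by omega
      rw [decProd_succ b c hbc', Equiv.Perm.mul_apply, ih hbc', adjTrans_apply]
      split_ifs <;> omega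

lemma a_shift (a : ℕ → ℕ) (i m : ℕ)
    (hstep : ∀ t, i ≤ t → t + 1 ≤ i + m → a (t + 1) = a t + 1) :
    ∀ d u, i ≤ u → u + d ≤ i + m → a (u + d) = a u + d := by
  intro d
  induction d with
  | zero => intro u _ _; simp
  | succ d ih =>
    intro u hu hud
    have h1 : a (u + d + 1) = a (u + d) + 1 := hstep (u + d) (by omega) (by omega)
    have h2 : a (u + d) = a u + d := ih u hu (by omega)
    show a (u + d + 1) = a u + (d + 1)
    omega

lemma bigW_apply (a : ℕ → ℕ) :
    ∀ m i, (∀ t, i ≤ t → t + 1 ≤ i + m → a (t + 1) = a t + 1) →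
    (∀ t, i ≤ t → t ≤ i + m → t ≤ a t) → ∀ x,
    ((List.range' i (m + 1)).map (fun u => decProd u (a u))).prod x =
      if x < i then x else if x ≤ i + m then a x + 1
      else if x ≤ a (i + m) + 1 then x - (m + 1) else x := by
  intro m
  induction m with
  | zero =>
    intro i _ hb x
    simp only [List.range'_succ, List.range', List.map_cons, List.map_nil, List.prod_cons,
      List.prod_nil, mul_one, Nat.add_zero]
    rw [decProd_apply i (a i) x (hb i le_rfl (by omega))]
    rcases Nat.lt_trichotomy x i with h | h | h
    · rw [if_neg (by omega), if_neg (by omega), if_pos h]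
    · subst h
      rw [if_pos rfl, if_neg (by omega), if_pos le_rfl]
    · rw [if_neg (show ¬ x = i by omega)]
      split_ifs <;> omega
  | succ m ih =>
    intro i hs hb x
    have hrange : List.range' i (m + 1 + 1) = i :: List.range' (i + 1) (m + 1) := by
      rw [List.range'_succ]
    rw [hrange, List.map_cons, List.prod_cons, Equiv.Perm.mul_apply]
    have hs' : ∀ t, i + 1 ≤ t → t + 1 ≤ i + 1 + m → a (t + 1) = a t + 1 := by
      intro t h1 h2; exact hs t (by omega) (by omega)
    have hb' : ∀ t, i + 1 ≤ t → t ≤ i + 1 + m → t ≤ a t := by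
      intro t h1 h2; exact hb t (by omega) (by omega)
    rw [ih (i + 1) hs' hb' x]
    have hshift := a_shift a i (m + 1) hs
    have hai : i ≤ a i := hb i le_rfl (by omega)
    have haim : a (i + 1 + m) = a i + (m + 1) := by
      have h := hshift (m + 1) i le_rfl (by omega)
      have he : i + (m + 1) = i + 1 + m := by omega
      rw [he] at h
      omega
    have haim2 : a (i + (m + 1)) = a i + (m + 1) := by
      have h := hshift (m + 1) i le_rfl (by omega)
      omega
    have hd := decProd_apply i (a i)
    rcases Nat.lt_trichotomy x i with h | h | h
    · rw [if_pos (show x < i + 1 by omega), hd x hai]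
      split_ifs <;> omega
    · subst h
      rw [if_pos (show x < x + 1 by omega), hd x hai]
      rw [if_pos rfl]
      rw [if_neg (by omega : ¬ x < x), if_pos (by omega : x ≤ x + (m + 1))]
    · rw [if_neg (show ¬ x < i + 1 by omega)]
      by_cases h1 : x ≤ i + 1 + m
      · rw [if_pos h1]
        have hax : a x = a i + (x - i) := by
          have hx := hshift (x - i) i le_rfl (by omega)
          have he : i + (x - i) = x := by omega
          rw [he] at hx; omega
        rw [hd (a x + 1) hai]
        split_ifs <;> omega
      · rw [if_neg h1]
        by_cases h2 : x ≤ a (i + 1 + m) + 1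
        · rw [if_pos h2, hd (x - (m + 1)) hai]
          split_ifs <;> omega
        · rw [if_neg h2, hd x hai]
          split_ifs <;> omega

theorem stmt17 (n i k : ℕ) (a : ℕ → ℕ) (hn : 1 ≤ n) (hi : 1 ≤ i) (hik : i < k)
    (hstep : ∀ t, i ≤ t → t ≤ k - 1 → a (t + 1) = a t + 1)
    (hbound : ∀ t, i ≤ t → t ≤ k → t ≤ a t ∧ a t ≤ n) :
    ∀ t, i ≤ t → t ≤ a k → t ≠ k →
      ∃ l, 1 ≤ l ∧ l ≤ n ∧ l ≠ a i ∧
        act (((List.range' i (k + 1 - i)).map (fun u => decProd u (a u))).prod) (α t) = α l := by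
  intro t hti hta htk
  set m : ℕ := k - i with hm
  have hkm : k = i + m := by omega
  have hlen : k + 1 - i = m + 1 := by omega
  have hs : ∀ t, i ≤ t → t + 1 ≤ i + m → a (t + 1) = a t + 1 := by
    intro t h1 h2; exact hstep t h1 (by omega)
  have hb : ∀ t, i ≤ t → t ≤ i + m → t ≤ a t := by
    intro t h1 h2; exact (hbound t h1 (by omega)).1
  have hW := bigW_apply a m i hs hb
  have hWk : ∀ x, ((List.range' i (m + 1)).map (fun u => decProd u (a u))).prod x =
      if x < i then x else if x ≤ k then a x + 1
      else if x ≤ a k + 1 then x - (m + 1) else x := by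
    intro x; rw [hW x, hkm]
  have hshift := a_shift a i m hs
  have hak : a k ≤ n := (hbound k (by omega) le_rfl).2
  have haik : a k = a i + m := by
    have h := hshift m i le_rfl le_rfl
    rw [← hkm] at h; omega
  have hai : i ≤ a i := hb i le_rfl (by omega)
  rw [hlen]
  rcases Nat.lt_or_ge t k with h | h
  · -- t < k : l = a t + 1
    have hat : a t = a i + (t - i) := by
      have hx := hshift (t - i) i le_rfl (by omega)
      have he : i + (t - i) = t := by omega
      rw [he] at hx; omega
    have hat1 : a (t + 1) = a t + 1 := hs t hti (by omega)
    refine ⟨a t + 1, by omega, by omega, by omega, ?_⟩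
    apply act_alpha
    · rw [hWk t, if_neg (by omega), if_pos (by omega)]
    · rw [hWk (t + 1), if_neg (by omega), if_pos (by omega), hat1]
  · -- k < t ≤ a k : l = t - (m + 1)
    have hkt : k < t := by omega
    refine ⟨t - (m + 1), by omega, by omega, by omega, ?_⟩
    apply act_alpha
    · rw [hWk t, if_neg (by omega), if_neg (by omega), if_pos (by omega)]
    · rw [hWk (t + 1), if_neg (by omega), if_neg (by omega), if_pos (by omega)]
      omega
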